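/- If s ≤ min{2λ/G², 1/L}, then the sequence {X^t}_{t≥1} generated by Algorithm 2 (non-monotone accelerated proximal gradient descent with support projection) satisfies supp(σ(X^{t+1})) ⊆ supp(σ(X^t)) for all t ≥ 1. -/

import Mathlib

open Matrix Finset Filter Topology

noncomputable section

/-- The vector of singular values of a real `n × k` matrix, in decreasing order:
`sval A i` is the `i`-th largest singular value of `A`. -/
noncomputable def sval {n k : ℕ} (A : Matrix (Fin n) (Fin k) ℝ) : Fin k → ℝ := fun i =>
  Real.sqrt
    ((Matrix.isHermitian_conjTranspose_mul_self A).eigenvalues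
      (Tuple.sort (Matrix.isHermitian_conjTranspose_mul_self A).eigenvalues i.rev))

/-- The largest singular value of a matrix. -/
noncomputable def smax {n k : ℕ} (A : Matrix (Fin n) (Fin k) ℝ) : ℝ := ⨆ i, sval A i

open Classical in
/-- The support of the singular value vector of `A`. -/
noncomputable def suppσ {n k : ℕ} (A : Matrix (Fin n) (Fin k) ℝ) : Finset (Fin k) :=
  Finset.univ.filter (fun i => sval A i ≠ 0)

/-- The Frobenius norm. -/
noncomputable def frobNorm {n k : ℕ} (A : Matrix (Fin n) (Fin k) ℝ) : ℝ :=
  Real.sqrt (∑ i, ∑ j, (A i j) ^ 2)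

/-- The Frobenius inner product `⟨A, B⟩ = trace (Aᵀ * B)`. -/
noncomputable def frobInner {n k : ℕ} (A B : Matrix (Fin n) (Fin k) ℝ) : ℝ :=
  (Aᵀ * B).trace

/-- The rectangular diagonal matrix of singular values of `A` (in decreasing order). -/
noncomputable def svalMatrix {n k : ℕ} (A : Matrix (Fin n) (Fin k) ℝ) :
    Matrix (Fin n) (Fin k) ℝ :=
  Matrix.of fun i j => if (i : ℕ) = (j : ℕ) then sval A j else 0

/-- `p = (U, V)` is a singular value decomposition of `A`: `U`, `V` orthogonal and
`A = U Σ Vᵀ`, where `Σ` is the rectangular diagonal matrix of singular values of `A`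
in decreasing order. -/
def IsSVD {n k : ℕ} (A : Matrix (Fin n) (Fin k) ℝ)
    (p : Matrix (Fin n) (Fin n) ℝ × Matrix (Fin k) (Fin k) ℝ) : Prop :=
  p.1 ∈ Matrix.orthogonalGroup (Fin n) ℝ ∧ p.2 ∈ Matrix.orthogonalGroup (Fin k) ℝ ∧
    A = p.1 * svalMatrix A * p.2ᵀ

open Classical in
/-- The singular value hard-thresholding operator `T_θ`. -/
noncomputable def hardThreshold {n k : ℕ} (θ : ℝ) (A : Matrix (Fin n) (Fin k) ℝ) :
    Matrix (Fin n) (Fin k) ℝ :=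
  if h : ∃ p, IsSVD A p then
    h.choose.1 *
      (Matrix.of fun i j => if |svalMatrix A i j| ≤ θ then 0 else svalMatrix A i j) *
      h.choose.2ᵀ
  else 0

open Classical in
/-- The support projection operator `P_S` on the singular values of a matrix. -/
noncomputable def suppProj {n k : ℕ} (S : Finset (Fin k)) (A : Matrix (Fin n) (Fin k) ℝ) :
    Matrix (Fin n) (Fin k) ℝ :=
  if h : ∃ p, IsSVD A p then
    h.choose.1 * (Matrix.of fun i j => if j ∈ S then svalMatrix A i j else 0) * h.choose.2ᵀ
  else 0

end

attribute [local instance] Matrix.frobeniusNormedAddCommGroup Matrix.frobeniusNormedSpace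

section Helpers

open Matrix Finset

private lemma sval_nonneg {n k : ℕ} (A : Matrix (Fin n) (Fin k) ℝ) (i : Fin k) :
    0 ≤ sval A i := Real.sqrt_nonneg _

private lemma sval_antitone {n k : ℕ} (A : Matrix (Fin n) (Fin k) ℝ) : Antitone (sval A) := by
  intro i j hij
  apply Real.sqrt_le_sqrt
  have h := Tuple.monotone_sort ((Matrix.isHermitian_conjTranspose_mul_self A).eigenvalues)
    (Fin.rev_le_rev.mpr hij)
  simpa using h

private lemma eig_nonneg {n k : ℕ} (A : Matrix (Fin n) (Fin k) ℝ) (j : Fin k) :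
    0 ≤ (Matrix.isHermitian_conjTranspose_mul_self A).eigenvalues j := by
  exact (Matrix.posSemidef_conjTranspose_mul_self A).eigenvalues_nonneg j

private lemma smax_nonneg {n k : ℕ} (E : Matrix (Fin n) (Fin k) ℝ) : 0 ≤ smax E :=
  Real.iSup_nonneg fun _ => Real.sqrt_nonneg _

private lemma card_filter_perm {k : ℕ} (π : Equiv.Perm (Fin k)) (p : Fin k → Prop)
    [DecidablePred p] :
    (Finset.univ.filter (fun i => p (π i))).card = (Finset.univ.filter p).card := by
  refine Finset.card_bij (fun i _ => π i) ?_ ?_ ?_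
  · intro a ha
    simp only [Finset.mem_filter, Finset.mem_univ, true_and] at ha ⊢
    exact ha
  · intro a _ b _ hab
    exact π.injective hab
  · intro b hb
    refine ⟨π.symm b, ?_, by simp⟩
    simp only [Finset.mem_filter, Finset.mem_univ, true_and] at hb ⊢
    simpa using hb

private lemma card_filter_sval {n k : ℕ} (A : Matrix (Fin n) (Fin k) ℝ) (p : ℝ → Prop)
    [DecidablePred p] :
    (Finset.univ.filter (fun i => p (sval A i))).card =
      (Finset.univ.filter (fun j =>
        p (Real.sqrt ((Matrix.isHermitian_conjTranspose_mul_self A).eigenvalues j)))).card := by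
  set μ := (Matrix.isHermitian_conjTranspose_mul_self A).eigenvalues with hμ
  have h := card_filter_perm (Fin.revPerm.trans (Tuple.sort μ))
    (fun j => p (Real.sqrt (μ j)))
  rw [← h]
  rfl

private lemma card_suppσ {n k : ℕ} (A : Matrix (Fin n) (Fin k) ℝ) :
    (suppσ A).card = A.rank := by
  classical
  have h0 : (suppσ A).card = (Finset.univ.filter fun i => sval A i ≠ 0).card := by
    rw [suppσ]
  rw [h0, card_filter_sval A (fun r => r ≠ 0)]
  have h1 : (Finset.univ.filter fun j =>
      (Real.sqrt ((Matrix.isHermitian_conjTranspose_mul_self A).eigenvalues j) ≠ 0)) =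
      (Finset.univ.filter fun j =>
        (Matrix.isHermitian_conjTranspose_mul_self A).eigenvalues j ≠ 0) := by
    apply Finset.filter_congr
    intro j _
    have hnn := eig_nonneg A j
    constructor
    · intro hne heq
      exact hne (by rw [heq, Real.sqrt_zero])
    · intro hne hsq
      rw [Real.sqrt_eq_zero'] at hsq
      exact hne (le_antisymm hsq hnn)
  rw [h1, ← Fintype.card_subtype, ← Matrix.IsHermitian.rank_eq_card_non_zero_eigs,
    Matrix.rank_conjTranspose_mul_self]

private lemma lower_subset {k : ℕ} {S T : Finset (Fin k)}
    (hS : ∀ i j : Fin k, i ≤ j → j ∈ S → i ∈ S)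
    (hT : ∀ i j : Fin k, i ≤ j → j ∈ T → i ∈ T)
    (h : S.card ≤ T.card) : S ⊆ T := by
  intro a haS
  by_contra haT
  have h1 : T ⊆ Finset.Iio a := by
    intro x hx
    rw [Finset.mem_Iio]
    by_contra hax
    push_neg at hax
    exact haT (hT a x hax hx)
  have h2 : Finset.Iic a ⊆ S := fun x hx => hS x a (Finset.mem_Iic.mp hx) haS
  have h3 : Finset.Iio a ⊂ Finset.Iic a := by
    rw [Finset.ssubset_iff_of_subset
      (fun x hx => Finset.mem_Iic.mpr (le_of_lt (Finset.mem_Iio.mp hx)))]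
    exact ⟨a, Finset.mem_Iic.mpr le_rfl, by simp⟩
  have h4 := (Finset.card_le_card h1).trans_lt
    ((Finset.card_lt_card h3).trans_le (Finset.card_le_card h2))
  omega

private lemma suppσ_lower {n k : ℕ} (A : Matrix (Fin n) (Fin k) ℝ) :
    ∀ i j : Fin k, i ≤ j → j ∈ suppσ A → i ∈ suppσ A := by
  intro i j hij hj
  rw [suppσ, Finset.mem_filter] at hj ⊢
  refine ⟨Finset.mem_univ _, ?_⟩
  have h1 : 0 < sval A j := lt_of_le_of_ne (sval_nonneg A j) (Ne.symm hj.2)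
  exact ne_of_gt (lt_of_lt_of_le h1 (sval_antitone A hij))

private noncomputable def extMap {k : ℕ} (S : Finset (Fin k)) :
    (↥S → ℝ) →ₗ[ℝ] (Fin k → ℝ) where
  toFun y := fun i => if h : i ∈ S then y ⟨i, h⟩ else 0
  map_add' y z := by funext i; by_cases h : i ∈ S <;> simp [h]
  map_smul' c y := by funext i; by_cases h : i ∈ S <;> simp [h]

private lemma rank_le_of_col_support {n k : ℕ} (M : Matrix (Fin n) (Fin k) ℝ)
    (S : Finset (Fin k)) (h : ∀ i j, j ∉ S → M i j = 0) : M.rank ≤ S.card := by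
  classical
  have hle : LinearMap.range M.mulVecLin ≤ LinearMap.range (M.mulVecLin ∘ₗ extMap S) := by
    rintro v ⟨x, rfl⟩
    refine ⟨fun j => x ↑j, ?_⟩
    simp only [LinearMap.comp_apply, Matrix.mulVecLin_apply]
    funext i
    simp only [Matrix.mulVec, dotProduct]
    refine Finset.sum_congr rfl fun j _ => ?_
    by_cases hj : j ∈ S
    · show M i j * (if h' : j ∈ S then x ↑(⟨j, h'⟩ : ↥S) else 0) = _
      rw [dif_pos hj]
    · simp only [h i j hj, zero_mul]
  calc M.rank = Module.finrank ℝ (LinearMap.range M.mulVecLin) := rfl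
    _ ≤ Module.finrank ℝ (LinearMap.range (M.mulVecLin ∘ₗ extMap S)) :=
        Submodule.finrank_mono hle
    _ ≤ Module.finrank ℝ (↥S → ℝ) := LinearMap.finrank_range_le _
    _ = S.card := by rw [Module.finrank_fintype_fun_eq_card, Fintype.card_coe]

private lemma mulVec_dot {a b : ℕ} (A : Matrix (Fin a) (Fin b) ℝ) (x : Fin b → ℝ)
    (y : Fin a → ℝ) : (A.mulVec x) ⬝ᵥ y = x ⬝ᵥ (Aᵀ.mulVec y) := by
  rw [dotProduct_mulVec, Matrix.vecMul_transpose]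

private lemma spectral_real {k : ℕ} (H : Matrix (Fin k) (Fin k) ℝ) (hH : H.IsHermitian) :
    ((hH.eigenvectorUnitary : Matrix (Fin k) (Fin k) ℝ))ᵀ * H *
      ((hH.eigenvectorUnitary : Matrix (Fin k) (Fin k) ℝ)) =
      Matrix.diagonal hH.eigenvalues := by
  have h := hH.conjStarAlgAut_star_eigenvectorUnitary
  rw [Unitary.conjStarAlgAut_star_apply, Matrix.star_eq_conjTranspose,
    Matrix.conjTranspose_eq_transpose_of_trivial] at h
  exact h

private lemma orth_left {k : ℕ} (H : Matrix (Fin k) (Fin k) ℝ) (hH : H.IsHermitian) :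
    ((hH.eigenvectorUnitary : Matrix (Fin k) (Fin k) ℝ))ᵀ *
      ((hH.eigenvectorUnitary : Matrix (Fin k) (Fin k) ℝ)) = 1 := by
  have h := ((Unitary.mem_iff).mp (hH.eigenvectorUnitary).2).1
  rwa [Matrix.star_eq_conjTranspose, Matrix.conjTranspose_eq_transpose_of_trivial] at h

private lemma orth_right {k : ℕ} (H : Matrix (Fin k) (Fin k) ℝ) (hH : H.IsHermitian) :
    ((hH.eigenvectorUnitary : Matrix (Fin k) (Fin k) ℝ)) *
      ((hH.eigenvectorUnitary : Matrix (Fin k) (Fin k) ℝ))ᵀ = 1 := by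
  have h := ((Unitary.mem_iff).mp (hH.eigenvectorUnitary).2).2
  rwa [Matrix.star_eq_conjTranspose, Matrix.conjTranspose_eq_transpose_of_trivial] at h

private lemma quad_eq {k : ℕ} (H : Matrix (Fin k) (Fin k) ℝ) (hH : H.IsHermitian)
    (z : Fin k → ℝ) :
    (((hH.eigenvectorUnitary : Matrix (Fin k) (Fin k) ℝ)).mulVec z ⬝ᵥ
        H.mulVec (((hH.eigenvectorUnitary : Matrix (Fin k) (Fin k) ℝ)).mulVec z)
      = ∑ i, hH.eigenvalues i * z i ^ 2) ∧
    (((hH.eigenvectorUnitary : Matrix (Fin k) (Fin k) ℝ)).mulVec z ⬝ᵥ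
        ((hH.eigenvectorUnitary : Matrix (Fin k) (Fin k) ℝ)).mulVec z = ∑ i, z i ^ 2) := by
  set P : Matrix (Fin k) (Fin k) ℝ := ((hH.eigenvectorUnitary : Matrix (Fin k) (Fin k) ℝ))
    with hP
  constructor
  · rw [mulVec_dot, Matrix.mulVec_mulVec, Matrix.mulVec_mulVec, spectral_real H hH]
    simp only [dotProduct, Matrix.mulVec_diagonal]
    exact Finset.sum_congr rfl fun i _ => by ring
  · rw [mulVec_dot, Matrix.mulVec_mulVec, orth_left H hH, Matrix.one_mulVec]
    simp only [dotProduct]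
    exact Finset.sum_congr rfl fun i _ => by ring

private lemma sq_mulVec_le {n k : ℕ} (E : Matrix (Fin n) (Fin k) ℝ) (b : ℝ)
    (hb : ∀ j, (Matrix.isHermitian_conjTranspose_mul_self E).eigenvalues j ≤ b)
    (x : Fin k → ℝ) : (E.mulVec x) ⬝ᵥ (E.mulVec x) ≤ b * (x ⬝ᵥ x) := by
  set hH := Matrix.isHermitian_conjTranspose_mul_self E with hHdef
  set P : Matrix (Fin k) (Fin k) ℝ := ((hH.eigenvectorUnitary : Matrix (Fin k) (Fin k) ℝ))
    with hP
  set z := Pᵀ.mulVec x with hz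
  have hx : x = P.mulVec z := by
    rw [hz, Matrix.mulVec_mulVec, orth_right _ hH, Matrix.one_mulVec]
  have hq := quad_eq (Eᴴ * E) hH z
  rw [← hP] at hq
  have e3 : (E.mulVec x) ⬝ᵥ (E.mulVec x) = x ⬝ᵥ (Eᴴ * E).mulVec x := by
    rw [Matrix.conjTranspose_eq_transpose_of_trivial, ← Matrix.mulVec_mulVec]
    exact mulVec_dot E x _
  rw [e3, hx, hq.1, hq.2]
  calc ∑ i, hH.eigenvalues i * z i ^ 2 ≤ ∑ i, b * z i ^ 2 :=
      Finset.sum_le_sum fun i _ => mul_le_mul_of_nonneg_right (hb i) (sq_nonneg _)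
    _ = b * ∑ i, z i ^ 2 := (Finset.mul_sum _ _ _).symm

private lemma eig_le_sq {n k : ℕ} (E : Matrix (Fin n) (Fin k) ℝ) (Gb : ℝ) (hGb : smax E ≤ Gb)
    (j : Fin k) : (Matrix.isHermitian_conjTranspose_mul_self E).eigenvalues j ≤ Gb ^ 2 := by
  set μ := (Matrix.isHermitian_conjTranspose_mul_self E).eigenvalues with hμ
  set σp := Tuple.sort μ with hσ
  have h1 : sval E (Fin.rev (σp⁻¹ j)) = Real.sqrt (μ j) := by
    show Real.sqrt (μ (σp ((Fin.rev (σp⁻¹ j)).rev))) = _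
    rw [Fin.rev_rev, ← Equiv.Perm.mul_apply, mul_inv_cancel, Equiv.Perm.one_apply]
  have h2 : sval E (Fin.rev (σp⁻¹ j)) ≤ smax E :=
    le_ciSup (Set.Finite.bddAbove (Set.finite_range _)) _
  have h3 : Real.sqrt (μ j) ≤ Gb := h1 ▸ h2.trans hGb
  have h4 : 0 ≤ μ j := eig_nonneg E j
  calc μ j = Real.sqrt (μ j) ^ 2 := (Real.sq_sqrt h4).symm
    _ ≤ Gb ^ 2 := pow_le_pow_left₀ (Real.sqrt_nonneg _) h3 2

private lemma count_eig_le_rank {n k : ℕ} (Q W : Matrix (Fin n) (Fin k) ℝ) (c2 : ℝ)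
    (hE : ∀ x : Fin k → ℝ, ((Q - W).mulVec x) ⬝ᵥ ((Q - W).mulVec x) ≤ c2 * (x ⬝ᵥ x)) :
    (Finset.univ.filter fun j =>
        c2 < (Matrix.isHermitian_conjTranspose_mul_self Q).eigenvalues j).card ≤ W.rank := by
  classical
  by_contra hlt
  push_neg at hlt
  set hH := Matrix.isHermitian_conjTranspose_mul_self Q with hHdef
  set μ := hH.eigenvalues with hμ
  set Good := Finset.univ.filter fun j => c2 < μ j with hGood
  set P : Matrix (Fin k) (Fin k) ℝ := ((hH.eigenvectorUnitary : Matrix (Fin k) (Fin k) ℝ))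
    with hP
  set ψ := W.mulVecLin ∘ₗ (P.mulVecLin ∘ₗ extMap Good) with hψ
  have hrange : LinearMap.range ψ ≤ LinearMap.range W.mulVecLin :=
    LinearMap.range_comp_le_range _ _
  have h1 := LinearMap.finrank_range_add_finrank_ker ψ
  have hdom : Module.finrank ℝ (↥Good → ℝ) = Good.card := by
    rw [Module.finrank_fintype_fun_eq_card, Fintype.card_coe]
  have hr : Module.finrank ℝ (LinearMap.range ψ) ≤ W.rank := Submodule.finrank_mono hrange
  have hker : LinearMap.ker ψ ≠ ⊥ := by
    intro hbot
    rw [hbot, finrank_bot] at h1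
    rw [hdom] at h1
    omega
  obtain ⟨y, hyker, hy0⟩ := (Submodule.ne_bot_iff _).mp hker
  set z := extMap Good y with hzdef
  set x := P.mulVec z with hxdef
  have hWx : W.mulVec x = 0 := by
    have hk := LinearMap.mem_ker.mp hyker
    rw [hψ] at hk
    simpa [LinearMap.comp_apply, Matrix.mulVecLin_apply, ← hzdef, ← hxdef] using hk
  have hq := quad_eq (Qᴴ * Q) hH z
  rw [← hP, ← hxdef] at hq
  have e3 : (Q.mulVec x) ⬝ᵥ (Q.mulVec x) = x ⬝ᵥ (Qᴴ * Q).mulVec x := by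
    rw [Matrix.conjTranspose_eq_transpose_of_trivial, ← Matrix.mulVec_mulVec]
    exact mulVec_dot Q x _
  have e4 : Q.mulVec x = (Q - W).mulVec x := by
    rw [Matrix.sub_mulVec, hWx, sub_zero]
  have hzg : ∀ i, i ∉ Good → z i = 0 := fun i h => dif_neg h
  obtain ⟨j, hj⟩ : ∃ j, y j ≠ 0 := by
    by_contra hc
    push_neg at hc
    exact hy0 (funext hc)
  have hzj : z ↑j = y j := by
    show (if h : (↑j : Fin k) ∈ Good then y ⟨↑j, h⟩ else 0) = y j
    rw [dif_pos j.2]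
  have hstrict : c2 * (∑ i, z i ^ 2) < ∑ i, μ i * z i ^ 2 := by
    rw [Finset.mul_sum]
    apply Finset.sum_lt_sum
    · intro i _
      by_cases hi : i ∈ Good
      · exact mul_le_mul_of_nonneg_right (Finset.mem_filter.mp hi).2.le (sq_nonneg _)
      · rw [hzg i hi]
        simp
    · refine ⟨↑j, Finset.mem_univ _, ?_⟩
      have hjG : (↑j : Fin k) ∈ Good := j.2
      have hc : c2 < μ ↑j := (Finset.mem_filter.mp hjG).2
      have hzpos : (0:ℝ) < z ↑j ^ 2 := by
        rw [hzj]
        positivity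
      exact mul_lt_mul_of_pos_right hc hzpos
  have hle := hE x
  rw [← e4, e3, hq.1, hq.2] at hle
  linarith

private lemma isUnit_det_of_orth {m : ℕ} {A : Matrix (Fin m) (Fin m) ℝ}
    (h : A ∈ Matrix.orthogonalGroup (Fin m) ℝ) : IsUnit A.det := by
  have h2 := ((Unitary.mem_iff).mp h).2
  apply IsUnit.of_mul_eq_one (star A).det
  rw [← Matrix.det_mul, h2, Matrix.det_one]

end Helpers

theorem apg_nonmonotone_support_shrinkage    {n k : ℕ} (g : Matrix (Fin n) (Fin k) ℝ → ℝ)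
    (gradg : Matrix (Fin n) (Fin k) ℝ → Matrix (Fin n) (Fin k) ℝ) (L G lam s : ℝ)
    (hconv : ConvexOn ℝ Set.univ g) (hdiff : Differentiable ℝ g)
    (hgrad : ∀ X V, fderiv ℝ g X V = frobInner (gradg X) V)
    (hlip : ∀ A B, frobNorm (gradg A - gradg B) ≤ L * frobNorm (A - B))
    (hG : ∀ A, smax (gradg A) ≤ G)
    (hlam : 0 < lam) (hs : 0 < s) (hL : 0 < L)
    (hstep : s ≤ min (2 * lam / G ^ 2) (1 / L))
    (X U V : ℕ → Matrix (Fin n) (Fin k) ℝ) (α : ℕ → ℝ)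
    (hX1 : X 1 = X 0) (hα0 : α 0 = 1)
    (hαrec : ∀ t : ℕ, α (t + 1) = (Real.sqrt (1 + 4 * α t ^ 2) + 1) / 2)
    (hU : ∀ t ≥ 1, U t = X t + ((α (t - 1) - 1) / α t) • (X t - X (t - 1)))
    (hV : ∀ t ≥ 1, V t = suppProj (suppσ (X t)) (U t))
    (hXrec : ∀ t ≥ 1, X (t + 1) = hardThreshold (Real.sqrt (2 * lam * s)) (V t - s • gradg (V t)))
    :
    ∀ t ≥ 1, suppσ (X (t + 1)) ⊆ suppσ (X t) := by
  classical
  intro t ht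
  have hG0 : 0 ≤ G := le_trans (smax_nonneg (gradg 0)) (hG 0)
  have hGpos : 0 < G := by
    rcases eq_or_lt_of_le hG0 with h | h
    · exfalso
      have h2 := hstep.trans (min_le_left _ _)
      rw [← h] at h2
      norm_num at h2
      linarith
    · exact h
  have hsG : s ^ 2 * G ^ 2 ≤ 2 * lam * s := by
    have h2 : s ≤ 2 * lam / G ^ 2 := hstep.trans (min_le_left _ _)
    rw [le_div_iff₀ (by positivity)] at h2
    nlinarith [hs.le]
  have hrankV : (V t).rank ≤ (suppσ (X t)).card := by
    rw [hV t ht, suppProj]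
    by_cases hsvd : ∃ p, IsSVD (U t) p
    · rw [dif_pos hsvd]
      obtain ⟨ho1, ho2, -⟩ := hsvd.choose_spec
      rw [Matrix.mul_assoc,
        Matrix.rank_mul_eq_right_of_isUnit_det _ _ (isUnit_det_of_orth ho1),
        Matrix.rank_mul_eq_left_of_isUnit_det _ _
          (by rw [Matrix.det_transpose]; exact isUnit_det_of_orth ho2)]
      apply rank_le_of_col_support
      intro i j hj
      simp only [Matrix.of_apply, if_neg hj]
    · rw [dif_neg hsvd]
      simp [Matrix.rank_zero]
  set Qt := V t - s • gradg (V t) with hQt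
  have hEbound : ∀ x : Fin k → ℝ,
      ((Qt - V t).mulVec x) ⬝ᵥ ((Qt - V t).mulVec x) ≤ (s ^ 2 * G ^ 2) * (x ⬝ᵥ x) := by
    intro x
    have hdm : Qt - V t = -(s • gradg (V t)) := by rw [hQt, sub_sub_cancel_left]
    rw [hdm, Matrix.neg_mulVec, Matrix.smul_mulVec]
    have hb := sq_mulVec_le (gradg (V t)) (G ^ 2)
      (fun j => eig_le_sq _ G (hG (V t)) j) x
    have h5 := mul_le_mul_of_nonneg_left hb (sq_nonneg s)
    simp only [dotProduct_neg, neg_dotProduct, neg_neg,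
      smul_dotProduct, dotProduct_smul, smul_eq_mul]
    nlinarith [h5]
  have hcount := count_eig_le_rank Qt (V t) (s ^ 2 * G ^ 2) hEbound
  have hcard : (suppσ (X (t + 1))).card ≤ (suppσ (X t)).card := by
    rw [card_suppσ, hXrec t ht, ← hQt, hardThreshold]
    by_cases hsvd : ∃ p, IsSVD Qt p
    · rw [dif_pos hsvd]
      obtain ⟨ho1, ho2, -⟩ := hsvd.choose_spec
      rw [Matrix.mul_assoc,
        Matrix.rank_mul_eq_right_of_isUnit_det _ _ (isUnit_det_of_orth ho1),
        Matrix.rank_mul_eq_left_of_isUnit_det _ _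
          (by rw [Matrix.det_transpose]; exact isUnit_det_of_orth ho2)]
      have hstep1 : (Matrix.of fun i j =>
            if |svalMatrix Qt i j| ≤ Real.sqrt (2 * lam * s) then 0
            else svalMatrix Qt i j).rank
          ≤ (Finset.univ.filter fun j => Real.sqrt (2 * lam * s) < sval Qt j).card := by
        apply rank_le_of_col_support
        intro i j hj
        simp only [Finset.mem_filter, Finset.mem_univ, true_and, not_lt] at hj
        simp only [Matrix.of_apply]
        rw [if_pos]
        rw [svalMatrix]
        by_cases hij : (i : ℕ) = (j : ℕ)
        · simp only [Matrix.of_apply, if_pos hij]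
          rw [abs_of_nonneg (sval_nonneg _ _)]
          exact hj
        · simp only [Matrix.of_apply, if_neg hij, abs_zero]
          exact Real.sqrt_nonneg _
      refine hstep1.trans ?_
      have hcnt : (Finset.univ.filter fun j => Real.sqrt (2 * lam * s) < sval Qt j).card
          = (Finset.univ.filter fun j => (2 * lam * s) <
              (Matrix.isHermitian_conjTranspose_mul_self Qt).eigenvalues j).card := by
        rw [card_filter_sval Qt (fun r => Real.sqrt (2 * lam * s) < r)]
        congr 1
        apply Finset.filter_congr
        intro j _
        rw [Real.lt_sqrt (Real.sqrt_nonneg _), Real.sq_sqrt (by positivity)]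
      rw [hcnt]
      refine le_trans (Finset.card_le_card ?_) (hcount.trans hrankV)
      intro j hj
      simp only [Finset.mem_filter, Finset.mem_univ, true_and] at hj ⊢
      linarith
    · rw [dif_neg hsvd]
      simp [Matrix.rank_zero]
  exact lower_subset (suppσ_lower _) (suppσ_lower _) hcard
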